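/- Let G = (𝒴, E) be an undirected graph without loops on the finite set 𝒴 and let {φ_y : ℝ_{>0}^{b(y)} → ℝ | y ∈ 𝒴} be differentiable convex local potentials. Define the G-local potential φ(f) = Σ_{y∈𝒴} f_y φ_y(f_{b(y)}/f_y) on ℱ = ℝ_{>0}^𝒴. Then for all f, g ∈ ℱ, the Bregman divergence of φ decomposes as D_φ(f, g) = Σ_{y∈𝒴} f_y · D_{φ_y}(f_{b(y)}/f_y, g_{b(y)}/g_y). -/

import Mathlib

open scoped BigOperators

noncomputable def bregman {A : Type*} [Fintype A] [DecidableEq A]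
    (φ : (A → ℝ) → ℝ) (f g : A → ℝ) : ℝ :=
  φ f - φ g - ∑ a, fderiv ℝ φ g (Pi.single a 1) * (f a - g a)

def posOrth (A : Type*) : Set (A → ℝ) := {g | ∀ a, 0 < g a}

def probSet (Y : Type*) [Fintype Y] : Set (Y → ℝ) :=
  {p | (∀ y, 0 < p y) ∧ ∑ y, p y = 1}

noncomputable def DPhi {Y : Type*} [Fintype Y] [DecidableEq Y]
    (G : SimpleGraph Y) [DecidableRel G.Adj] (Y0 : Finset Y)
    (φ : ∀ y : Y, (↥(G.neighborSet y) → ℝ) → ℝ) (f g : Y → ℝ) : ℝ :=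
  ∑ y ∈ Y0, f y * bregman (φ y) (fun z => f z.1 / f y) (fun z => g z.1 / g y)

def nbd {Y : Type*} (G : SimpleGraph Y) (y : Y) : Set Y := insert y (G.neighborSet y)

/-- Graph `G₀` on a vertex subset: edges when closed neighborhoods intersect. -/
def overlapGraph {Y : Type*} (G : SimpleGraph Y) (Y0 : Set Y) : SimpleGraph Y0 where
  Adj a b := a ≠ b ∧ (nbd G a.1 ∩ nbd G b.1).Nonempty
  symm := by
    constructor
    intro a b h
    exact ⟨h.1.symm, by rw [Set.inter_comm]; exact h.2⟩
  loopless := ⟨fun a h => h.1 rfl⟩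

/-- Graph `G₀'` on a vertex subset: edges when open neighborhoods intersect. -/
def bOverlapGraph {Y : Type*} (G : SimpleGraph Y) (Y0 : Set Y) : SimpleGraph Y0 where
  Adj a b := a ≠ b ∧ (G.neighborSet a.1 ∩ G.neighborSet b.1).Nonempty
  symm := by
    constructor
    intro a b h
    exact ⟨h.1.symm, by rw [Set.inter_comm]; exact h.2⟩
  loopless := ⟨fun a h => h.1 rfl⟩

noncomputable def psPot (γ : ℝ) {A : Type*} [Fintype A] (f : A → ℝ) : ℝ :=
  (∑ a, f a ^ (1 + γ)) ^ (1 / (1 + γ))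

/-
The global potential is a sum of perspectives `h ↦ h_y φ_y(h_{b(y)}/h_y)`, and the Bregman
divergence is additive over sums of differentiable functions. For one perspective, the derivative
at `g` in the direction `f - g` is `(f_y - g_y) φ_y(g_{b(y)}/g_y)` plus `Dφ_y` applied to `g_y`
times the derivative of the ratio map, and
`g_y ((f_z - g_z)/g_y - g_z (f_y - g_y)/g_y²) = f_y (f_z/f_y - g_z/g_y)`,
which turns `D` of the perspective into `f_y D_{φ_y}`.
-/

open ContinuousLinearMap

lemma isOpen_posOrth (A : Type*) [Finite A] : IsOpen (posOrth A) := by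
  have : posOrth A = Set.univ.pi fun _ => Set.Ioi 0 := by
    ext g; simp [posOrth]
  rw [this]
  exact isOpen_set_pi Set.finite_univ fun _ _ => isOpen_Ioi

section Bregman

variable {A : Type*} [Fintype A] [DecidableEq A]

lemma bregman_eq_fderiv (φ : (A → ℝ) → ℝ) (f g : A → ℝ) :
    bregman φ f g = φ f - φ g - fderiv ℝ φ g (f - g) := by
  have hsum : ∑ a, fderiv ℝ φ g (Pi.single a 1) * (f a - g a) = fderiv ℝ φ g (f - g) := by
    conv_rhs => rw [← Finset.univ_sum_single (f - g), map_sum]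
    refine Finset.sum_congr rfl fun a _ => ?_
    rw [mul_comm, ← smul_eq_mul, ← map_smul, ← Pi.single_smul', smul_eq_mul, mul_one,
      Pi.sub_apply]
  rw [bregman, hsum]

lemma bregman_finset_sum {ι : Type*} (s : Finset ι) (φ : ι → (A → ℝ) → ℝ) {f g : A → ℝ}
    (hφ : ∀ i ∈ s, DifferentiableAt ℝ (φ i) g) :
    bregman (fun h => ∑ i ∈ s, φ i h) f g = ∑ i ∈ s, bregman (φ i) f g := by
  have hderiv : HasFDerivAt (fun h => ∑ i ∈ s, φ i h) (∑ i ∈ s, fderiv ℝ (φ i) g) g :=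
    HasFDerivAt.fun_sum fun i hi => (hφ i hi).hasFDerivAt
  simp only [bregman_eq_fderiv, hderiv.fderiv, sum_apply, Finset.sum_sub_distrib]

end Bregman

section Perspective

variable {A B : Type*}

noncomputable def ratioFDeriv (ι : B → A) (y : A) (g : A → ℝ) : (A → ℝ) →L[ℝ] B → ℝ :=
  pi fun b => (g y)⁻¹ • (proj (ι b) - (g (ι b) / g y) • proj y)

lemma smul_ratioFDeriv_sub (ι : B → A) (y : A) {f g : A → ℝ} (hf : f y ≠ 0) (hg : g y ≠ 0) :
    g y • ratioFDeriv ι y g (f - g)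
      = f y • ((fun b => f (ι b) / f y) - fun b => g (ι b) / g y) := by
  ext b
  simp only [ratioFDeriv, Pi.smul_apply, pi_apply, smul_apply, sub_apply, proj_apply,
    Pi.sub_apply, smul_eq_mul]
  field_simp
  ring

variable [Fintype A]

lemma hasFDerivAt_div_apply (ι : B → A) (y : A) {g : A → ℝ} (hg : g y ≠ 0) :
    HasFDerivAt (fun h : A → ℝ => fun b => h (ι b) / h y) (ratioFDeriv ι y g) g := by
  simp only [div_eq_mul_inv]
  refine hasFDerivAt_pi.2 fun b => ?_
  refine ((hasFDerivAt_apply (ι b) g).mul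
    ((hasDerivAt_inv hg).comp_hasFDerivAt g (hasFDerivAt_apply (𝕜 := ℝ) y g))).congr_fderiv ?_
  ext v
  simp only [neg_smul, smul_neg, Function.comp_apply, add_apply, neg_apply,
    smul_apply, proj_apply, smul_eq_mul, sub_apply]
  field_simp
  ring

variable [Fintype B]

lemma hasFDerivAt_perspective (ι : B → A) (y : A) (ψ : (B → ℝ) → ℝ) {g : A → ℝ}
    (hg : g y ≠ 0) (hψ : DifferentiableAt ℝ ψ fun b => g (ι b) / g y) :
    HasFDerivAt (fun h : A → ℝ => h y * ψ fun b => h (ι b) / h y)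
      (g y • (fderiv ℝ ψ fun b => g (ι b) / g y).comp (ratioFDeriv ι y g)
        + ψ (fun b => g (ι b) / g y) • proj y) g :=
  (hasFDerivAt_apply y g).mul (hψ.hasFDerivAt.comp g (hasFDerivAt_div_apply ι y hg))

theorem bregman_perspective [DecidableEq A] [DecidableEq B] (ι : B → A) (y : A)
    (ψ : (B → ℝ) → ℝ) {f g : A → ℝ} (hf : f y ≠ 0) (hg : g y ≠ 0)
    (hψ : DifferentiableAt ℝ ψ fun b => g (ι b) / g y) :
    bregman (fun h : A → ℝ => h y * ψ fun b => h (ι b) / h y) f g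
      = f y * bregman ψ (fun b => f (ι b) / f y) (fun b => g (ι b) / g y) := by
  have hchain := congrArg (fderiv ℝ ψ fun b => g (ι b) / g y) (smul_ratioFDeriv_sub ι y hf hg)
  simp only [map_smul, smul_eq_mul] at hchain
  rw [bregman_eq_fderiv, bregman_eq_fderiv, (hasFDerivAt_perspective ι y ψ hg hψ).fderiv]
  simp only [add_apply, smul_apply, coe_comp, Function.comp_apply, proj_apply, smul_eq_mul,
    Pi.sub_apply, hchain]
  ring

end Perspective

theorem stmt7_general {Y : Type*} [Fintype Y] [DecidableEq Y]
    (G : SimpleGraph Y) [DecidableRel G.Adj]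
    (φ : ∀ y : Y, (↥(G.neighborSet y) → ℝ) → ℝ)
    (hdiff : ∀ y : Y, DifferentiableOn ℝ (φ y) (posOrth ↥(G.neighborSet y)))
    (f g : Y → ℝ) (hf : f ∈ posOrth Y) (hg : g ∈ posOrth Y) :
    bregman (fun h : Y → ℝ => ∑ y : Y, h y * φ y (fun z => h z.1 / h y)) f g
      = DPhi G Finset.univ φ f g := by
  have hφ : ∀ y, DifferentiableAt ℝ (φ y) fun z => g z.1 / g y := fun y =>
    (hdiff y).differentiableAt <|
      (isOpen_posOrth _).mem_nhds fun z => div_pos (hg z.1) (hg y)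
  rw [bregman_finset_sum _ _ fun y _ =>
    (hasFDerivAt_perspective Subtype.val y (φ y) (hg y).ne' (hφ y)).differentiableAt]
  exact Finset.sum_congr rfl fun y _ =>
    bregman_perspective Subtype.val y (φ y) (hf y).ne' (hg y).ne' (hφ y)

/-- The Bregman divergence of the `G`-local potential
`φ(f) = Σ_y f_y φ_y(f_{b(y)}/f_y)` decomposes into the composite local Bregman divergence:
`D_φ(f, g) = Σ_y f_y D_{φ_y}(f_{b(y)}/f_y, g_{b(y)}/g_y)`. -/
theorem stmt7 {Y : Type*} [Fintype Y] [DecidableEq Y]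
    (G : SimpleGraph Y) [DecidableRel G.Adj]
    (φ : ∀ y : Y, (↥(G.neighborSet y) → ℝ) → ℝ)
    (hconv : ∀ y : Y, ConvexOn ℝ (posOrth ↥(G.neighborSet y)) (φ y))
    (hdiff : ∀ y : Y, DifferentiableOn ℝ (φ y) (posOrth ↥(G.neighborSet y)))
    (f g : Y → ℝ) (hf : f ∈ posOrth Y) (hg : g ∈ posOrth Y) :
    bregman (fun h : Y → ℝ => ∑ y : Y, h y * φ y (fun z => h z.1 / h y)) f g
      = DPhi G Finset.univ φ f g :=
  stmt7_general G φ hdiff f g hf hg
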